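/- arXiv:1612.01939 — 4 statements merged into one kernel-verified Lean document; each statement's English description precedes it below -/
import Mathlib

section
/- Let Y be a real m×n matrix of rank r_Y with singular value decomposition Y = U_Y Σ_Y V_Yᵀ whose singular values are arranged in decreasing order, and let r ≤ r_Y. Then the matrix X* = U_Y[1:r] Σ_Y[1:r] V_Y[1:r]ᵀ, obtained by keeping only the r largest singular values and the corresponding left and right singular vectors, satisfies ‖X* − Y‖²_F ≤ ‖X − Y‖²_F for every real m×n matrix X of rank at most r. -/
open Matrix BigOperators

noncomputable def frobSq {m n : ℕ} (M : Matrix (Fin m) (Fin n) ℝ) : ℝ :=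
  ∑ i, ∑ j, (M i j) ^ 2

section helpers

lemma sum_ite_eq_val' {a : ℕ} (c : ℕ) (f : Fin a → ℝ) :
    ∑ l : Fin a, (if (l : ℕ) = c then f l else 0) = if h : c < a then f ⟨c, h⟩ else 0 := by
  by_cases h : c < a
  · rw [dif_pos h, Finset.sum_eq_single ⟨c, h⟩]
    · simp
    · intro l _ hl
      rw [if_neg]
      intro hval
      exact hl (Fin.ext (by simp only [Fin.val_mk]; omega))
    · simp
  · rw [dif_neg h]
    apply Finset.sum_eq_zero
    intro l _
    rw [if_neg]
    have := l.isLt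
    omega

lemma sum_ite_eq_val {a b : ℕ} (i : Fin a) (v : ℝ) :
    ∑ j : Fin b, (if (i : ℕ) = (j : ℕ) then v else 0) = if (i : ℕ) < b then v else 0 := by
  have h : ∀ j : Fin b, (if (i : ℕ) = (j : ℕ) then v else 0)
      = (if (j : ℕ) = (i : ℕ) then v else 0) := by
    intro j; by_cases h : (i : ℕ) = (j : ℕ) <;> simp [h, eq_comm] <;> omega
  rw [Finset.sum_congr rfl (fun j _ => h j), sum_ite_eq_val' (i : ℕ) (fun _ => v)]
  by_cases h : (i : ℕ) < b <;> simp [h]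

end helpers

lemma frobSq_eq_trace {m n : ℕ} (M : Matrix (Fin m) (Fin n) ℝ) :
    frobSq M = Matrix.trace (Mᵀ * M) := by
  unfold frobSq
  rw [Finset.sum_comm]
  simp [Matrix.trace, Matrix.diag, Matrix.mul_apply, sq]

lemma frobSq_neg {m n : ℕ} (M : Matrix (Fin m) (Fin n) ℝ) : frobSq (-M) = frobSq M := by
  simp [frobSq]

lemma frobSq_nonneg {m n : ℕ} (M : Matrix (Fin m) (Fin n) ℝ) : 0 ≤ frobSq M := by
  apply Finset.sum_nonneg; intro i _; apply Finset.sum_nonneg; intro j _; positivity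

lemma frobSq_conj {m n : ℕ} (U : Matrix (Fin m) (Fin m) ℝ) (V : Matrix (Fin n) (Fin n) ℝ)
    (hU : Uᵀ * U = 1) (hV : Vᵀ * V = 1) (M : Matrix (Fin m) (Fin n) ℝ) :
    frobSq (U * M * Vᵀ) = frobSq M := by
  rw [frobSq_eq_trace, frobSq_eq_trace]
  have h1 : (U * M * Vᵀ)ᵀ * (U * M * Vᵀ) = V * ((Mᵀ * M) * Vᵀ) := by
    calc (U * M * Vᵀ)ᵀ * (U * M * Vᵀ)
        = V * (Mᵀ * ((Uᵀ * U) * (M * Vᵀ))) := by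
          simp only [Matrix.transpose_mul, Matrix.transpose_transpose, Matrix.mul_assoc]
      _ = V * ((Mᵀ * M) * Vᵀ) := by rw [hU]; simp [Matrix.mul_assoc]
  rw [h1, Matrix.trace_mul_comm, Matrix.mul_assoc, hV, Matrix.mul_one]

lemma frobSq_split {m n : ℕ} (P : Matrix (Fin m) (Fin m) ℝ) (hsym : Pᵀ = P) (hid : P * P = P)
    (M : Matrix (Fin m) (Fin n) ℝ) :
    frobSq M = frobSq (P * M) + frobSq ((1 - P) * M) := by
  have hsym' : (1 - P)ᵀ = 1 - P := by rw [Matrix.transpose_sub, Matrix.transpose_one, hsym]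
  have hid' : (1 - P) * (1 - P) = 1 - P := by
    have h : (1 - P) * (1 - P) = 1 - P - P + P * P := by noncomm_ring
    rw [h, hid]; abel
  have e1 : (P * M)ᵀ * (P * M) = Mᵀ * (P * M) := by
    simp only [Matrix.transpose_mul, hsym, Matrix.mul_assoc]
    rw [← Matrix.mul_assoc P P M, hid]
  have e2 : ((1 - P) * M)ᵀ * ((1 - P) * M) = Mᵀ * ((1 - P) * M) := by
    simp only [Matrix.transpose_mul, hsym', Matrix.mul_assoc]
    rw [← Matrix.mul_assoc (1-P) (1-P) M, hid']
  rw [frobSq_eq_trace, frobSq_eq_trace, frobSq_eq_trace, e1, e2, ← Matrix.trace_add,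
    ← Matrix.mul_add, ← Matrix.add_mul]
  congr 1
  rw [add_sub_cancel, Matrix.one_mul]

lemma card_filter_lt {m r : ℕ} (hrm : r ≤ m) :
    (Finset.univ.filter (fun i : Fin m => (i : ℕ) < r)).card = r := by
  have h : (Finset.univ.filter (fun i : Fin m => (i : ℕ) < r)).map Fin.valEmbedding
      = Finset.range r := by
    ext k
    simp only [Finset.mem_map, Finset.mem_filter, Finset.mem_univ, true_and,
      Fin.valEmbedding_apply, Finset.mem_range]
    constructor
    · rintro ⟨i, hi, rfl⟩; exact hi
    · intro hk; exact ⟨⟨k, by omega⟩, hk, rfl⟩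
  have := congrArg Finset.card h
  simpa using this

lemma range_filter_lt (a b : ℕ) : (Finset.range a).filter (fun k => k < b) = Finset.range (min a b) := by
  ext k; simp only [Finset.mem_filter, Finset.mem_range, lt_min_iff]

lemma sum_fin_ite_val {a b : ℕ} (f : Fin a → ℝ) :
    ∑ j : Fin b, (if h : (j : ℕ) < a then f ⟨(j : ℕ), h⟩ else 0)
      = ∑ i : Fin a, (if (i : ℕ) < b then f i else 0) := by
  classical
  set g : ℕ → ℝ := fun k => if h : k < a then f ⟨k, h⟩ else 0 with hg
  have hL : ∑ j : Fin b, (if h : (j : ℕ) < a then f ⟨(j : ℕ), h⟩ else 0)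
      = ∑ k ∈ Finset.range b, g k := Fin.sum_univ_eq_sum_range g b
  have hR : ∑ i : Fin a, (if (i : ℕ) < b then f i else 0)
      = ∑ k ∈ Finset.range a, (if k < b then g k else 0) := by
    have h1 : ∑ i : Fin a, (if (i : ℕ) < b then f i else 0)
        = ∑ i : Fin a, (if ((i : ℕ)) < b then g (i : ℕ) else 0) := by
      apply Finset.sum_congr rfl
      intro i _
      by_cases h : (i : ℕ) < b
      · rw [if_pos h, if_pos h, hg]; simp
      · rw [if_neg h, if_neg h]
    rw [h1]
    exact Fin.sum_univ_eq_sum_range (fun k => if k < b then g k else 0) a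
  rw [hL, hR, ← Finset.sum_filter, range_filter_lt]
  have : ∑ k ∈ Finset.range b, g k = ∑ k ∈ (Finset.range b).filter (fun k => k < a), g k := by
    rw [Finset.sum_filter]
    apply Finset.sum_congr rfl
    intro k _
    by_cases h : k < a
    · rw [if_pos h]
    · rw [if_neg h, hg]; simp [h]
  rw [this, range_filter_lt, min_comm]

lemma lp_bound {m r : ℕ} (hrm : r ≤ m) (c t : Fin m → ℝ)
    (hc0 : ∀ i, 0 ≤ c i) (hcdec : ∀ i j : Fin m, i ≤ j → c j ≤ c i)
    (ht0 : ∀ i, 0 ≤ t i) (ht1 : ∀ i, t i ≤ 1)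
    (hts : ∑ i, t i ≤ (r : ℝ)) :
    ∑ i, c i * t i ≤ ∑ i ∈ Finset.univ.filter (fun i : Fin m => (i : ℕ) < r), c i := by
  classical
  rcases Nat.eq_zero_or_pos r with hr0 | hrpos
  · subst hr0
    have hz : ∀ i, t i = 0 := by
      intro i
      have := Finset.sum_eq_zero_iff_of_nonneg (fun i _ => ht0 i) |>.mp
        (le_antisymm (by simpa using hts) (Finset.sum_nonneg fun i _ => ht0 i))
      exact this i (Finset.mem_univ i)
    simp [hz]
  · set A := Finset.univ.filter (fun i : Fin m => (i : ℕ) < r) with hA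
    have hcard : A.card = r := card_filter_lt hrm
    set κ := c ⟨r - 1, by omega⟩ with hκ
    have hκ0 : 0 ≤ κ := hc0 _
    have hAineq : ∑ i ∈ A, c i * (t i - 1) ≤ ∑ i ∈ A, κ * (t i - 1) := by
      apply Finset.sum_le_sum
      intro i hi
      have hi' : (i : ℕ) < r := by simpa [hA] using hi
      have hle : κ ≤ c i := hcdec i ⟨r - 1, by omega⟩ (by simp [Fin.le_def]; omega)
      exact mul_le_mul_of_nonpos_right hle (by linarith [ht1 i])
    have hBineq : ∑ i ∈ Aᶜ, c i * t i ≤ ∑ i ∈ Aᶜ, κ * t i := by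
      apply Finset.sum_le_sum
      intro i hi
      have hi' : ¬ (i : ℕ) < r := by simpa [hA] using hi
      have hle : c i ≤ κ := hcdec ⟨r - 1, by omega⟩ i (by simp [Fin.le_def]; omega)
      exact mul_le_mul_of_nonneg_right hle (ht0 i)
    have hsplitc : ∑ i ∈ A, c i * t i = ∑ i ∈ A, c i * (t i - 1) + ∑ i ∈ A, c i := by
      rw [← Finset.sum_add_distrib]; apply Finset.sum_congr rfl; intros; ring
    have hsumA : ∑ i ∈ A, κ * (t i - 1) = κ * (∑ i ∈ A, t i) - κ * r := by
      rw [← Finset.mul_sum, Finset.sum_sub_distrib, Finset.sum_const, hcard]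
      push_cast
      ring
    have hsumB : ∑ i ∈ Aᶜ, κ * t i = κ * ∑ i ∈ Aᶜ, t i := (Finset.mul_sum _ _ _).symm
    have htot : ∑ i ∈ A, t i + ∑ i ∈ Aᶜ, t i = ∑ i, t i := (Finset.sum_add_sum_compl A t)
    have hsplit : ∑ i, c i * t i = ∑ i ∈ A, c i * t i + ∑ i ∈ Aᶜ, c i * t i :=
      (Finset.sum_add_sum_compl A _).symm
    nlinarith [hAineq, hBineq]

lemma exists_proj {m n r : ℕ} (Z : Matrix (Fin m) (Fin n) ℝ) (hZ : Z.rank ≤ r) :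
    ∃ P : Matrix (Fin m) (Fin m) ℝ, Pᵀ = P ∧ P * P = P ∧ P * Z = Z ∧
      Matrix.trace P ≤ (r : ℝ) ∧ (∀ i, 0 ≤ P i i) := by
  classical
  set E := EuclideanSpace ℝ (Fin m) with hE
  let e : E ≃ₗ[ℝ] (Fin m → ℝ) := WithLp.linearEquiv 2 ℝ (Fin m → ℝ)
  set Wpi : Submodule ℝ (Fin m → ℝ) := LinearMap.range Z.mulVecLin with hWpi
  set W : Submodule ℝ E := Wpi.comap e.toLinearMap with hW
  set d := Module.finrank ℝ W with hd
  have hdr : d ≤ r := by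
    have h1 : W = Wpi.map e.symm.toLinearMap := by
      rw [Submodule.map_equiv_eq_comap_symm]
      simp
      exact hW
    have h2 : Module.finrank ℝ W = Module.finrank ℝ Wpi := by
      rw [h1]
      exact LinearEquiv.finrank_map_eq e.symm Wpi
    have h3 : Module.finrank ℝ Wpi = Z.rank := rfl
    omega
  let b : OrthonormalBasis (Fin d) ℝ W := stdOrthonormalBasis ℝ W
  let q : Fin d → (Fin m → ℝ) := fun k => e ((b k : E))
  let Q : Matrix (Fin m) (Fin d) ℝ := Matrix.of fun i k => q k i
  have hinner : ∀ x y : W, (inner ℝ x y : ℝ) = ∑ i : Fin m, (e (x : E)) i * (e (y : E)) i := by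
    intro x y
    rw [Submodule.coe_inner, PiLp.inner_apply]
    apply Finset.sum_congr rfl
    intro i _
    rw [RCLike.inner_apply, conj_trivial]
    exact mul_comm _ _
  have hQQ : Qᵀ * Q = 1 := by
    ext k l
    rw [Matrix.mul_apply]
    have : ∑ i, Qᵀ k i * Q i l = ∑ i : Fin m, (e ((b k : E))) i * (e ((b l : E))) i := rfl
    rw [this, ← hinner (b k) (b l)]
    rcases orthonormal_iff_ite.mp b.orthonormal k l with h
    rw [h]
    by_cases hkl : k = l <;> simp [hkl, Matrix.one_apply]
  have hcol : ∀ j : Fin n, (fun i => Z i j) ∈ Wpi := by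
    intro j
    refine ⟨Pi.single j 1, ?_⟩
    funext i
    simp [Matrix.mulVecLin_apply, Matrix.mulVec, dotProduct, Pi.single_apply, mul_ite]
  have hPZ : (Q * Qᵀ) * Z = Z := by
    ext i j
    set zcol : Fin m → ℝ := fun i' => Z i' j with hzcol
    have hmem : e.symm zcol ∈ W := by
      rw [hW, Submodule.mem_comap]
      have h : e.toLinearMap (e.symm zcol) = zcol := e.apply_symm_apply zcol
      rw [h]
      exact hcol j
    set w : W := ⟨e.symm zcol, hmem⟩ with hw
    have hew : e (w : E) = zcol := e.apply_symm_apply zcol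
    have hexp : ∀ i' : Fin m, zcol i' = ∑ k, (inner ℝ (b k) w : ℝ) * q k i' := by
      intro i'
      let f : W →ₗ[ℝ] ℝ := (LinearMap.proj i').comp (e.toLinearMap.comp W.subtype)
      have h0 := b.sum_repr' w
      have h1 := congrArg f h0
      rw [map_sum] at h1
      simp only [_root_.map_smul, smul_eq_mul] at h1
      have hf : ∀ k, f (b k) = q k i' := fun k => rfl
      have hfw : f w = zcol i' := by
        show e ((w : E)) i' = zcol i'
        rw [hew]
      simp only [hf, hfw] at h1
      exact h1.symm
    have hPil : ∀ l, (Q * Qᵀ) i l = ∑ k, q k i * q k l := by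
      intro l
      rw [Matrix.mul_apply]
      apply Finset.sum_congr rfl
      intro k _
      rw [Matrix.transpose_apply]
      rfl
    have hbkw : ∀ k, (inner ℝ (b k) w : ℝ) = ∑ l, q k l * zcol l := by
      intro k
      rw [hinner (b k) w]
      apply Finset.sum_congr rfl
      intro l _
      rw [hew]
    rw [Matrix.mul_apply]
    calc ∑ l, (Q * Qᵀ) i l * Z l j
        = ∑ l, ∑ k, (q k i * q k l) * zcol l := by
          apply Finset.sum_congr rfl
          intro l _
          rw [hPil l, Finset.sum_mul]
      _ = ∑ k, ∑ l, q k i * (q k l * zcol l) := by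
          rw [Finset.sum_comm]
          apply Finset.sum_congr rfl; intro k _
          apply Finset.sum_congr rfl; intro l _
          ring
      _ = ∑ k, q k i * (inner ℝ (b k) w : ℝ) := by
          apply Finset.sum_congr rfl
          intro k _
          rw [← Finset.mul_sum, hbkw k]
      _ = ∑ k, (inner ℝ (b k) w : ℝ) * q k i := by
          apply Finset.sum_congr rfl; intro k _; ring
      _ = zcol i := (hexp i).symm
  refine ⟨Q * Qᵀ, ?_, ?_, hPZ, ?_, ?_⟩
  · rw [Matrix.transpose_mul, Matrix.transpose_transpose]
  · calc Q * Qᵀ * (Q * Qᵀ) = Q * ((Qᵀ * Q) * Qᵀ) := by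
          simp only [Matrix.mul_assoc]
      _ = Q * Qᵀ := by rw [hQQ, Matrix.one_mul]
  · rw [Matrix.trace_mul_comm, hQQ, Matrix.trace_one]
    simpa using (Nat.cast_le (α := ℝ)).mpr hdr
  · intro i
    rw [Matrix.mul_apply]
    apply Finset.sum_nonneg
    intro k _
    exact mul_self_nonneg _

/-- **Eckart–Young** (Lemma 1): if `Y = U S Vᵀ` is an SVD of `Y` with singular values in
decreasing order, `Y` has rank `r_Y`, and `r ≤ r_Y`, then the rank-`r` truncation
`X* = U S_r Vᵀ` satisfies `‖X* − Y‖²_F ≤ ‖X − Y‖²_F` for every matrix `X` of rank at most `r`. -/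
theorem truncatedSVD_is_best_rank_r_approx
    {m n : ℕ} (Y : Matrix (Fin m) (Fin n) ℝ)
    (U : Matrix (Fin m) (Fin m) ℝ) (V : Matrix (Fin n) (Fin n) ℝ)
    (σ : ℕ → ℝ)
    (hU : Uᵀ * U = 1) (hV : Vᵀ * V = 1)
    (hσnonneg : ∀ i, 0 ≤ σ i)
    (hσdec : ∀ i j, i ≤ j → σ j ≤ σ i)
    (S : Matrix (Fin m) (Fin n) ℝ)
    (hS : ∀ i j, S i j = if (i : ℕ) = (j : ℕ) then σ (i : ℕ) else 0)
    (hSVD : Y = U * S * Vᵀ)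
    (rY : ℕ) (hrY : Y.rank = rY)
    (r : ℕ) (hr : r ≤ rY)
    (Sr : Matrix (Fin m) (Fin n) ℝ)
    (hSr : ∀ i j, Sr i j = if (i : ℕ) = (j : ℕ) ∧ (i : ℕ) < r then σ (i : ℕ) else 0)
    (Xstar : Matrix (Fin m) (Fin n) ℝ)
    (hXstar : Xstar = U * Sr * Vᵀ) :
    ∀ X : Matrix (Fin m) (Fin n) ℝ, X.rank ≤ r →
      frobSq (Xstar - Y) ≤ frobSq (X - Y) := by
  intro X hX
  classical
  have hrm : r ≤ m := by have h1 := Y.rank_le_height; omega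
  have hU' : U * Uᵀ = 1 := mul_eq_one_comm.mp hU
  have hV' : V * Vᵀ = 1 := mul_eq_one_comm.mp hV
  set Z := Uᵀ * X * V with hZdef
  have hXeq : X = U * Z * Vᵀ := by
    rw [hZdef]
    have h1 : U * (Uᵀ * X * V) * Vᵀ = U * Uᵀ * X * (V * Vᵀ) := by
      simp only [Matrix.mul_assoc]
    rw [h1, hU', hV', Matrix.one_mul, Matrix.mul_one]
  have hrkZ : Z.rank ≤ r :=
    le_trans (Matrix.rank_mul_le_left _ _)
      (le_trans (Matrix.rank_mul_le_right _ _) hX)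
  have hXY : frobSq (X - Y) = frobSq (Z - S) := by
    rw [hSVD]
    conv_lhs => rw [hXeq]
    rw [← Matrix.sub_mul, ← Matrix.mul_sub]
    exact frobSq_conj U V hU hV _
  have hXsY : frobSq (Xstar - Y) = frobSq (Sr - S) := by
    rw [hSVD, hXstar, ← Matrix.sub_mul, ← Matrix.mul_sub]
    exact frobSq_conj U V hU hV _
  obtain ⟨P, hPT, hPP, hPZ, htr, hdiag0⟩ := exists_proj Z hrkZ
  have hPsym : ∀ i k : Fin m, P k i = P i k := by
    intro i k
    have h := congrFun (congrFun hPT k) i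
    rw [Matrix.transpose_apply] at h
    exact h.symm
  have hPdiag : ∀ i0 : Fin m, P i0 i0 = ∑ k, (P k i0) ^ 2 := by
    intro i0
    conv_lhs => rw [← hPP]
    rw [Matrix.mul_apply]
    apply Finset.sum_congr rfl
    intro k _
    rw [hPsym i0 k]
    ring
  have hdiag1 : ∀ i, P i i ≤ 1 := by
    intro i
    have h3 : (P i i) ^ 2 ≤ P i i := by
      conv_rhs => rw [hPdiag i]
      have := Finset.single_le_sum (f := fun k => (P k i) ^ 2)
        (fun k _ => sq_nonneg _) (Finset.mem_univ i)
      simpa using this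
    nlinarith [hdiag0 i]
  set c : Fin m → ℝ := fun i => if (i : ℕ) < n then σ (i : ℕ) ^ 2 else 0 with hc
  set t : Fin m → ℝ := fun i => P i i with ht
  have hc0 : ∀ i, 0 ≤ c i := by
    intro i; rw [hc]; dsimp only; split_ifs
    · positivity
    · exact le_refl 0
  have hcdec : ∀ i j : Fin m, i ≤ j → c j ≤ c i := by
    intro i j hij
    rw [hc]; dsimp only
    have hij' : (i : ℕ) ≤ (j : ℕ) := hij
    by_cases hj : (j : ℕ) < n
    · rw [if_pos hj, if_pos (by omega)]
      have h1 : σ (j : ℕ) ≤ σ (i : ℕ) := hσdec _ _ hij'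
      have h2 : 0 ≤ σ (j : ℕ) := hσnonneg _
      nlinarith
    · rw [if_neg hj]
      split_ifs
      · positivity
      · exact le_refl 0
  have hts : ∑ i, t i ≤ (r : ℝ) := by
    have : Matrix.trace P = ∑ i, t i := by
      simp [Matrix.trace, Matrix.diag, ht]
    linarith [htr, this.symm.le]
  -- frobSq S = ∑ c
  have hfS : frobSq S = ∑ i, c i := by
    unfold frobSq
    apply Finset.sum_congr rfl
    intro i _
    have h1 : ∀ j : Fin n, (S i j) ^ 2
        = if (i : ℕ) = (j : ℕ) then σ (i : ℕ) ^ 2 else 0 := by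
      intro j; rw [hS]; split_ifs <;> simp
    rw [Finset.sum_congr rfl (fun j _ => h1 j), sum_ite_eq_val i (σ (i : ℕ) ^ 2)]
  -- frobSq (Sr - S)
  have hfSrS : frobSq (Sr - S)
      = ∑ i, c i - ∑ i ∈ Finset.univ.filter (fun i : Fin m => (i : ℕ) < r), c i := by
    have h0 : frobSq (Sr - S) = ∑ i : Fin m, (if ¬ (i : ℕ) < r then c i else 0) := by
      unfold frobSq
      apply Finset.sum_congr rfl
      intro i _
      have h1 : ∀ j : Fin n, ((Sr - S) i j) ^ 2
          = if (i : ℕ) = (j : ℕ) then (if ¬ (i : ℕ) < r then σ (i : ℕ) ^ 2 else 0) else 0 := by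
        intro j
        rw [Matrix.sub_apply, hSr, hS]
        by_cases h1 : (i : ℕ) = (j : ℕ) <;> by_cases h2 : (i : ℕ) < r
        · rw [if_pos ⟨h1, h2⟩, if_pos h1, if_pos h1, if_neg (not_not_intro h2), sub_self]
          norm_num
        · rw [if_neg (fun h => h2 h.2), if_pos h1, if_pos h1, if_pos h2]
          ring
        · rw [if_neg (fun h => h1 h.1), if_neg h1, if_neg h1, sub_self]
          norm_num
        · rw [if_neg (fun h => h1 h.1), if_neg h1, if_neg h1, sub_self]
          norm_num
      rw [Finset.sum_congr rfl (fun j _ => h1 j), sum_ite_eq_val i _]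
      rw [hc]; dsimp only
      by_cases h2 : (i : ℕ) < n <;> by_cases h3 : (i : ℕ) < r <;> simp [h2, h3]
    rw [h0]
    have h4 := Finset.sum_filter_add_sum_filter_not Finset.univ
      (fun i : Fin m => (i : ℕ) < r) c
    have h5 : ∑ i : Fin m, (if ¬ (i : ℕ) < r then c i else 0)
        = ∑ i ∈ Finset.univ.filter (fun i : Fin m => ¬ (i : ℕ) < r), c i :=
      (Finset.sum_filter _ _).symm
    linarith
  -- frobSq (P * S) = ∑ c * t
  have hPS : ∀ (k : Fin m) (j : Fin n), (P * S) k j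
      = if h : (j : ℕ) < m then σ (j : ℕ) * P k ⟨(j : ℕ), h⟩ else 0 := by
    intro k j
    rw [Matrix.mul_apply]
    have h1 : ∀ l : Fin m, P k l * S l j
        = if (l : ℕ) = (j : ℕ) then P k l * σ (l : ℕ) else 0 := by
      intro l
      rw [hS]
      split_ifs <;> simp
    rw [Finset.sum_congr rfl (fun l _ => h1 l),
      sum_ite_eq_val' (j : ℕ) (fun l => P k l * σ (l : ℕ))]
    split_ifs with h
    · ring
    · rfl
  have hfPS : frobSq (P * S) = ∑ i, c i * t i := by
    unfold frobSq
    rw [Finset.sum_comm]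
    have h1 : ∀ j : Fin n, ∑ k : Fin m, ((P * S) k j) ^ 2
        = if h : (j : ℕ) < m then σ (j : ℕ) ^ 2 * P ⟨(j : ℕ), h⟩ ⟨(j : ℕ), h⟩ else 0 := by
      intro j
      by_cases h : (j : ℕ) < m
      · rw [dif_pos h]
        have h2 : ∀ k : Fin m, ((P * S) k j) ^ 2
            = σ (j : ℕ) ^ 2 * (P k ⟨(j : ℕ), h⟩) ^ 2 := by
          intro k
          rw [hPS k j, dif_pos h]
          ring
        rw [Finset.sum_congr rfl (fun k _ => h2 k), ← Finset.mul_sum,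
          ← hPdiag ⟨(j : ℕ), h⟩]
      · rw [dif_neg h]
        apply Finset.sum_eq_zero
        intro k _
        rw [hPS k j, dif_neg h]
        ring
    rw [Finset.sum_congr rfl (fun j _ => h1 j),
      sum_fin_ite_val (fun i : Fin m => σ (i : ℕ) ^ 2 * P i i)]
    apply Finset.sum_congr rfl
    intro i _
    rw [hc, ht]; dsimp only
    split_ifs
    · rfl
    · rw [zero_mul]
  -- LP bound
  have hlp : ∑ i, c i * t i
      ≤ ∑ i ∈ Finset.univ.filter (fun i : Fin m => (i : ℕ) < r), c i :=
    lp_bound hrm c t hc0 hcdec (fun i => hdiag0 i) (fun i => hdiag1 i) hts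
  -- chain
  have hsplit := frobSq_split P hPT hPP (Z - S)
  have hsplitS := frobSq_split P hPT hPP S
  have h1P : (1 - P) * (Z - S) = -((1 - P) * S) := by
    rw [Matrix.mul_sub, Matrix.sub_mul, Matrix.one_mul, hPZ, sub_self, zero_sub]
  have hZS : frobSq ((1 - P) * (Z - S)) = frobSq ((1 - P) * S) := by
    rw [h1P, frobSq_neg]
  have hnn := frobSq_nonneg (P * (Z - S))
  rw [hXY, hXsY, hfSrS]
  have hfS' := hfS
  linarith [hsplit, hsplitS, hZS, hnn, hlp, hfPS, hfS']
end

section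
/- Let Y be a real m×n matrix of rank r_Y with singular values σ₁ ≥ σ₂ ≥ … ≥ σ_{r_Y} > 0, and let r ≤ r_Y. Then the minimum of ‖X − Y‖²_F over all real m×n matrices X of rank at most r equals the sum of σ_i² for i from r+1 to r_Y. -/
open Matrix BigOperators

lemma frobSq_mul_left {m n : ℕ} (A : Matrix (Fin m) (Fin m) ℝ) (hA : Aᵀ * A = 1)
    (M : Matrix (Fin m) (Fin n) ℝ) : frobSq (A * M) = frobSq M := by
  rw [frobSq_eq_trace, frobSq_eq_trace, Matrix.transpose_mul,
    Matrix.mul_assoc, ← Matrix.mul_assoc Aᵀ A M, hA, Matrix.one_mul]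

lemma frobSq_mul_right {m n : ℕ} (B : Matrix (Fin n) (Fin n) ℝ) (hB : B * Bᵀ = 1)
    (M : Matrix (Fin m) (Fin n) ℝ) : frobSq (M * B) = frobSq M := by
  have h : (M * B)ᵀ * (M * B) = Bᵀ * (Mᵀ * M * B) := by
    rw [Matrix.transpose_mul]; simp [Matrix.mul_assoc]
  rw [frobSq_eq_trace, frobSq_eq_trace, h, Matrix.trace_mul_comm,
    Matrix.mul_assoc, hB, Matrix.mul_one]

lemma rearr (N r : ℕ) (lam : ℕ → ℝ) (hdec : ∀ i j, i ≤ j → lam j ≤ lam i)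
    (hnn : ∀ i, 0 ≤ lam i) (p : ℕ → ℝ) (hp0 : ∀ i, 0 ≤ p i) (hp1 : ∀ i, p i ≤ 1)
    (hsum : ∑ i ∈ Finset.range N, p i ≤ r) :
    ∑ i ∈ Finset.range N, lam i * p i ≤ ∑ i ∈ Finset.range r, lam i := by
  rcases le_or_gt N r with h | h
  · calc ∑ i ∈ Finset.range N, lam i * p i ≤ ∑ i ∈ Finset.range N, lam i :=
          Finset.sum_le_sum (fun i _ => by nlinarith [hnn i, hp1 i, hp0 i])
    _ ≤ ∑ i ∈ Finset.range r, lam i :=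
          Finset.sum_le_sum_of_subset_of_nonneg (Finset.range_subset_range.2 h)
            (fun i _ _ => hnn i)
  · have hrN : r ≤ N := h.le
    rw [← Finset.sum_range_add_sum_Ico _ hrN]
    have h1 : ∑ i ∈ Finset.Ico r N, lam i * p i ≤ lam r * ∑ i ∈ Finset.Ico r N, p i := by
      rw [Finset.mul_sum]
      refine Finset.sum_le_sum (fun i hi => ?_)
      exact mul_le_mul_of_nonneg_right (hdec r i (Finset.mem_Ico.1 hi).1) (hp0 i)
    have hsplit : (∑ i ∈ Finset.range r, p i) + ∑ i ∈ Finset.Ico r N, p i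
        = ∑ i ∈ Finset.range N, p i := Finset.sum_range_add_sum_Ico _ hrN
    have h2 : lam r * ∑ i ∈ Finset.Ico r N, p i
        ≤ ∑ i ∈ Finset.range r, lam r * (1 - p i) := by
      have : ∑ i ∈ Finset.range r, lam r * (1 - p i)
          = lam r * ((r : ℝ) - ∑ i ∈ Finset.range r, p i) := by
        simp [mul_sub, Finset.sum_sub_distrib, Finset.mul_sum, mul_comm]
      rw [this]
      have := hnn r
      nlinarith [hsum, hsplit]
    have h3 : ∑ i ∈ Finset.range r, (lam i * p i + lam r * (1 - p i))
        ≤ ∑ i ∈ Finset.range r, lam i := by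
      refine Finset.sum_le_sum (fun i hi => ?_)
      have hi' := Finset.mem_range.1 hi
      have := hdec i r hi'.le
      nlinarith [hp1 i, hp0 i, hnn i]
    calc (∑ i ∈ Finset.range r, lam i * p i) + ∑ i ∈ Finset.Ico r N, lam i * p i
        ≤ (∑ i ∈ Finset.range r, lam i * p i) + ∑ i ∈ Finset.range r, lam r * (1 - p i) := by
          linarith [h1, h2]
      _ = ∑ i ∈ Finset.range r, (lam i * p i + lam r * (1 - p i)) := by
          rw [Finset.sum_add_distrib]
      _ ≤ ∑ i ∈ Finset.range r, lam i := h3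

lemma key_ineq {E : Type*} [NormedAddCommGroup E] [InnerProductSpace ℝ E]
    {ι : Type*} [Fintype ι] (v : ι → E) (hv : Orthonormal ℝ v)
    (c w : E) (hw : w ∈ Submodule.span ℝ (Set.range v)) :
    ‖c‖ ^ 2 - ∑ k, (inner ℝ (v k) c : ℝ) ^ 2 ≤ ‖w - c‖ ^ 2 := by
  set p : E := ∑ k, (inner ℝ (v k) c : ℝ) • v k with hp
  have hpv : ∀ i, (inner ℝ (v i) p : ℝ) = inner ℝ (v i) c := fun i =>
    hv.inner_right_fintype (fun k => (inner ℝ (v k) c : ℝ)) i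
  have hmem : p ∈ Submodule.span ℝ (Set.range v) :=
    Submodule.sum_mem _ (fun k _ => Submodule.smul_mem _ _
      (Submodule.subset_span ⟨k, rfl⟩))
  have horth : ∀ u ∈ Submodule.span ℝ (Set.range v), (inner ℝ u (c - p) : ℝ) = 0 := by
    intro u hu
    induction hu using Submodule.span_induction with
    | mem x hx =>
      obtain ⟨k, rfl⟩ := hx
      rw [inner_sub_right, hpv k, sub_self]
    | zero => exact inner_zero_left _
    | add x y _ _ hx hy => rw [inner_add_left, hx, hy, add_zero]
    | smul a x _ hx => rw [real_inner_smul_left, hx, mul_zero]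
  have h1 : (inner ℝ (w - p) (c - p) : ℝ) = 0 :=
    horth _ (Submodule.sub_mem _ hw hmem)
  have h2 : (inner ℝ p (c - p) : ℝ) = 0 := horth _ hmem
  have e1 : ‖w - c‖ ^ 2 = ‖w - p‖ ^ 2 + ‖c - p‖ ^ 2 := by
    have hd : w - c = (w - p) - (c - p) := by abel
    rw [hd, norm_sub_sq_real, h1]; ring
  have e2 : ‖c‖ ^ 2 = ‖c - p‖ ^ 2 + ‖p‖ ^ 2 := by
    have hd : c = (c - p) + p := by abel
    rw [hd]
    rw [norm_add_sq_real, real_inner_comm, h2]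
    rw [← hd]; ring
  have e3 : ‖p‖ ^ 2 = ∑ k, (inner ℝ (v k) c : ℝ) ^ 2 := by
    rw [← real_inner_self_eq_norm_sq]
    nth_rewrite 1 [hp]
    rw [sum_inner]
    refine Finset.sum_congr rfl (fun k _ => ?_)
    rw [real_inner_smul_left, hpv k, pow_two]
  nlinarith [sq_nonneg ‖w - p‖, e1, e2, e3]
lemma euc_normsq {m : ℕ} (x : EuclideanSpace ℝ (Fin m)) : ‖x‖ ^ 2 = ∑ i, (x i) ^ 2 := by
  rw [EuclideanSpace.norm_eq, Real.sq_sqrt (by positivity)]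
  simp [sq_abs]

lemma euc_inner {m : ℕ} (x y : EuclideanSpace ℝ (Fin m)) :
    (inner ℝ x y : ℝ) = ∑ i, x i * y i := by
  rw [PiLp.inner_apply]
  simp [RCLike.inner_apply, starRingEnd_apply, mul_comm]

lemma diag_lower {m n : ℕ} (σ : ℕ → ℝ) (hσnn : ∀ i, 0 ≤ σ i)
    (hσdec : ∀ i j, i ≤ j → σ j ≤ σ i) (hσm : ∀ i, m ≤ i → σ i = 0)
    (S W : Matrix (Fin m) (Fin n) ℝ)
    (hS : ∀ i j, S i j = if (i : ℕ) = (j : ℕ) then σ (i : ℕ) else 0)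
    (r : ℕ) (hW : W.rank ≤ r) :
    (∑ i ∈ Finset.range n, σ i ^ 2) - (∑ i ∈ Finset.range r, σ i ^ 2)
      ≤ frobSq (W - S) := by
  classical
  set E := EuclideanSpace ℝ (Fin m) with hE
  set eqv : (Fin m → ℝ) ≃ₗ[ℝ] E := (WithLp.linearEquiv 2 ℝ (Fin m → ℝ)).symm with heqv
  set C : Submodule ℝ E :=
    (LinearMap.range W.mulVecLin).map (eqv : (Fin m → ℝ) →ₗ[ℝ] E) with hCdef
  have hCrank : Module.finrank ℝ C ≤ r := by
    rw [hCdef, LinearEquiv.finrank_map_eq]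
    exact hW
  set d := Module.finrank ℝ C with hd
  set b := stdOrthonormalBasis ℝ C with hb
  set v : Fin d → E := fun k => (b k : E) with hvdef
  have hv : Orthonormal ℝ v := by
    rw [orthonormal_iff_ite]
    intro i j
    have h := b.orthonormal
    rw [orthonormal_iff_ite] at h
    simpa [hvdef, ← Submodule.coe_inner] using h i j
  have hspan : Submodule.span ℝ (Set.range v) = C := by
    have h1 : Set.range v = (C.subtype) '' Set.range b := by
      rw [← Set.range_comp]; rfl
    rw [h1, ← Submodule.map_span, ← b.coe_toBasis, b.toBasis.span_eq,
      Submodule.map_top, Submodule.range_subtype]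
  set colW : Fin n → E := fun j => eqv (fun i => W i j) with hcolW
  set colS : Fin n → E := fun j => eqv (fun i => S i j) with hcolS
  have hcolmem : ∀ j, colW j ∈ C := by
    intro j
    refine Submodule.mem_map.2 ⟨W.mulVec (Pi.single j 1), ⟨Pi.single j 1, rfl⟩, ?_⟩
    have h : W.mulVec (Pi.single j 1) = fun i => W i j := by
      rw [Matrix.mulVec_single]; simp; rfl
    rw [h]
    rfl
  set pfun : ℕ → ℝ := fun i => if h : i < m then ∑ k, (v k ⟨i, h⟩) ^ 2 else 0 with hpfun
  have hp0 : ∀ i, 0 ≤ pfun i := by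
    intro i; rw [hpfun]; dsimp only
    split
    · exact Finset.sum_nonneg fun k _ => sq_nonneg _
    · exact le_refl _
  have hp1 : ∀ i, pfun i ≤ 1 := by
    intro i; rw [hpfun]; dsimp only
    split
    case isTrue h =>
      have hb2 := hv.sum_inner_products_le (s := Finset.univ) (EuclideanSpace.single (⟨i, h⟩ : Fin m) (1:ℝ))
      have he : ∀ k, (inner ℝ (v k) (EuclideanSpace.single (⟨i, h⟩ : Fin m) (1:ℝ)) : ℝ)
          = v k ⟨i, h⟩ := by
        intro k
        rw [euc_inner]
        simp [EuclideanSpace.single_apply, mul_ite]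
      have hn : ‖EuclideanSpace.single (⟨i, h⟩ : Fin m) (1:ℝ)‖ ^ 2 = 1 := by
        rw [euc_normsq]
        simp [EuclideanSpace.single_apply, apply_ite (· ^ 2)]
      calc ∑ k, (v k ⟨i, h⟩) ^ 2
          = ∑ k, ‖(inner ℝ (v k) (EuclideanSpace.single (⟨i, h⟩ : Fin m) (1:ℝ)) : ℝ)‖ ^ 2 := by
            refine Finset.sum_congr rfl fun k _ => ?_
            rw [he k, Real.norm_eq_abs, sq_abs]
        _ ≤ ‖EuclideanSpace.single (⟨i, h⟩ : Fin m) (1:ℝ)‖ ^ 2 := hb2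
        _ = 1 := hn
    case isFalse h => norm_num
  have hall : ∑ i ∈ Finset.range m, pfun i = d := by
    rw [← Fin.sum_univ_eq_sum_range]
    have h1 : ∀ i : Fin m, pfun i = ∑ k, (v k i) ^ 2 := by
      intro i
      rw [hpfun]; dsimp only
      rw [dif_pos i.isLt]
    rw [Finset.sum_congr rfl (fun i _ => h1 i), Finset.sum_comm]
    have hnorm : ∀ k, ∑ i, (v k i) ^ 2 = 1 := by
      intro k
      rw [← euc_normsq, hv.1 k, one_pow]
    rw [Finset.sum_congr rfl fun k _ => hnorm k]
    simp
  have hsum : ∑ i ∈ Finset.range n, pfun i ≤ (r : ℝ) := by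
    have h1 : ∑ i ∈ Finset.range n, pfun i ≤ ∑ i ∈ Finset.range (max m n), pfun i :=
      Finset.sum_le_sum_of_subset_of_nonneg
        (Finset.range_subset_range.2 (le_max_right _ _)) (fun i _ _ => hp0 i)
    have h2 : ∑ i ∈ Finset.range (max m n), pfun i = ∑ i ∈ Finset.range m, pfun i := by
      symm
      apply Finset.sum_subset (Finset.range_subset_range.2 (le_max_left _ _))
      intro x _ hnx
      have hx : m ≤ x := by simpa using hnx
      rw [hpfun]; dsimp only
      rw [dif_neg (not_lt.2 hx)]
    have h3 : (d : ℝ) ≤ r := Nat.cast_le.2 hCrank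
    rw [hall] at h2
    linarith
  have percol : ∀ j : Fin n,
      σ (j:ℕ) ^ 2 - σ (j:ℕ) ^ 2 * pfun (j:ℕ) ≤ ‖colW j - colS j‖ ^ 2 := by
    intro j
    have hk := key_ineq v hv (colS j) (colW j) (hspan ▸ hcolmem j)
    by_cases hjm : (j:ℕ) < m
    · have hcs : ∀ i : Fin m, colS j i = if i = (⟨(j:ℕ), hjm⟩ : Fin m) then σ (j:ℕ) else 0 := by
        intro i
        have h0 : colS j i = S i j := rfl
        rw [h0, hS]
        by_cases h : (i:ℕ) = (j:ℕ)
        · rw [if_pos h, if_pos (Fin.ext h), h]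
        · rw [if_neg h, if_neg (fun hc => h (by rw [hc]))]
      have hnormS : ‖colS j‖ ^ 2 = σ (j:ℕ) ^ 2 := by
        rw [euc_normsq]
        rw [Finset.sum_congr rfl fun i _ => by rw [hcs i]]
        simp [apply_ite (· ^ 2)]
      have hinner : ∀ k, (inner ℝ (v k) (colS j) : ℝ) = σ (j:ℕ) * v k ⟨(j:ℕ), hjm⟩ := by
        intro k
        rw [euc_inner]
        rw [Finset.sum_congr rfl fun i _ => by rw [hcs i]]
        simp [mul_ite, mul_comm]
      have hq : ∑ k, (inner ℝ (v k) (colS j) : ℝ) ^ 2 = σ (j:ℕ) ^ 2 * pfun (j:ℕ) := by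
        rw [hpfun]; dsimp only
        rw [dif_pos hjm, Finset.mul_sum]
        refine Finset.sum_congr rfl fun k _ => ?_
        rw [hinner k]; ring
      calc σ (j:ℕ) ^ 2 - σ (j:ℕ) ^ 2 * pfun (j:ℕ)
          = ‖colS j‖ ^ 2 - ∑ k, (inner ℝ (v k) (colS j) : ℝ) ^ 2 := by rw [hnormS, hq]
        _ ≤ _ := hk
    · have hz : σ (j:ℕ) = 0 := hσm _ (not_lt.1 hjm)
      have h0 : σ (j:ℕ) ^ 2 - σ (j:ℕ) ^ 2 * pfun (j:ℕ) = 0 := by rw [hz]; ring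
      rw [h0]; positivity
  have hfrob : frobSq (W - S) = ∑ j : Fin n, ‖colW j - colS j‖ ^ 2 := by
    unfold frobSq
    rw [Finset.sum_comm]
    refine Finset.sum_congr rfl fun j _ => ?_
    rw [euc_normsq]
    refine Finset.sum_congr rfl fun i _ => ?_
    rfl
  rw [hfrob]
  have htot : ∑ j : Fin n, (σ (j:ℕ) ^ 2 - σ (j:ℕ) ^ 2 * pfun (j:ℕ))
      ≤ ∑ j : Fin n, ‖colW j - colS j‖ ^ 2 :=
    Finset.sum_le_sum fun j _ => percol j
  have hsplit : ∑ j : Fin n, (σ (j:ℕ) ^ 2 - σ (j:ℕ) ^ 2 * pfun (j:ℕ))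
      = (∑ i ∈ Finset.range n, σ i ^ 2) - ∑ i ∈ Finset.range n, σ i ^ 2 * pfun i := by
    rw [← Fin.sum_univ_eq_sum_range (fun i => σ i ^ 2) n,
      ← Fin.sum_univ_eq_sum_range (fun i => σ i ^ 2 * pfun i) n,
      ← Finset.sum_sub_distrib]
  rw [hsplit] at htot
  have hre := rearr n r (fun i => σ i ^ 2)
    (fun i j hij => pow_le_pow_left₀ (hσnn j) (hσdec i j hij) 2)
    (fun i => sq_nonneg _) pfun hp0 hp1 hsum
  linarith

/-- If `Y = U S Vᵀ` is an SVD of `Y` with singular values `σ₀ ≥ σ₁ ≥ …`, exactly the first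
`r_Y` of which are positive (the rest are zero), `Y` has rank `r_Y`, and `r ≤ r_Y`, then the
minimum of `‖X − Y‖²_F` over all matrices `X` of rank at most `r` equals `∑_{i=r}^{r_Y-1} σᵢ²`
(indices `0`-based, i.e. the sum of the squares of the discarded singular values). -/
theorem min_frobSq_rank_r_approx
    {m n : ℕ} (Y : Matrix (Fin m) (Fin n) ℝ)
    (U : Matrix (Fin m) (Fin m) ℝ) (V : Matrix (Fin n) (Fin n) ℝ)
    (σ : ℕ → ℝ)
    (hU : Uᵀ * U = 1) (hV : Vᵀ * V = 1)
    (hσdec : ∀ i j, i ≤ j → σ j ≤ σ i)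
    (rY : ℕ) (hrY : Y.rank = rY)
    (hσpos : ∀ i, i < rY → 0 < σ i)
    (hσzero : ∀ i, rY ≤ i → σ i = 0)
    (S : Matrix (Fin m) (Fin n) ℝ)
    (hS : ∀ i j, S i j = if (i : ℕ) = (j : ℕ) then σ (i : ℕ) else 0)
    (hSVD : Y = U * S * Vᵀ)
    (r : ℕ) (hr : r ≤ rY) :
    IsLeast {c : ℝ | ∃ X : Matrix (Fin m) (Fin n) ℝ, X.rank ≤ r ∧ c = frobSq (X - Y)}
      (∑ i ∈ Finset.Ico r rY, (σ i) ^ 2) := by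
  classical
  have hUU : U * Uᵀ = 1 := mul_eq_one_comm.mp hU
  have hVV : V * Vᵀ = 1 := mul_eq_one_comm.mp hV
  have hσnn : ∀ i, 0 ≤ σ i := by
    intro i
    rcases lt_or_ge i rY with h | h
    · exact (hσpos i h).le
    · exact (hσzero i h).ge
  have hrYm : rY ≤ m := by rw [← hrY]; exact Y.rank_le_height
  have hrYn : rY ≤ n := by rw [← hrY]; exact Y.rank_le_width
  constructor
  · -- membership: truncated SVD
    set Sr : Matrix (Fin m) (Fin n) ℝ :=
      fun i j => if (i:ℕ) = (j:ℕ) ∧ (i:ℕ) < r then σ (i:ℕ) else 0 with hSr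
    refine ⟨U * Sr * Vᵀ, ?_, ?_⟩
    · set P : Matrix (Fin m) (Fin r) ℝ :=
        fun i k => if (i:ℕ) = (k:ℕ) then σ (i:ℕ) else 0 with hP
      set Q : Matrix (Fin r) (Fin n) ℝ :=
        fun k j => if (k:ℕ) = (j:ℕ) then 1 else 0 with hQ
      have hfac : Sr = P * Q := by
        ext i j
        rw [Matrix.mul_apply]
        rcases lt_or_ge (i:ℕ) r with hir | hir
        · rw [Finset.sum_eq_single (⟨(i:ℕ), hir⟩ : Fin r)]
          · show (if (i:ℕ) = (j:ℕ) ∧ (i:ℕ) < r then σ (i:ℕ) else 0)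
              = (if (i:ℕ) = (((⟨(i:ℕ), hir⟩ : Fin r)) : ℕ) then σ (i:ℕ) else 0)
                * (if (((⟨(i:ℕ), hir⟩ : Fin r)) : ℕ) = (j:ℕ) then 1 else 0)
            by_cases h : (i:ℕ) = (j:ℕ)
            · rw [if_pos ⟨h, hir⟩, if_pos rfl, if_pos h, mul_one]
            · rw [if_neg (fun hc => h hc.1), if_pos rfl, if_neg h, mul_zero]
          · intro k _ hk
            have hik : (i:ℕ) ≠ (k:ℕ) := fun hc => hk (Fin.ext hc.symm)
            simp [hP, hik]
          · simp
        · have h0 : ∀ k ∈ (Finset.univ : Finset (Fin r)), P i k * Q k j = 0 := by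
            intro k _
            have hik : (i:ℕ) ≠ (k:ℕ) := by have := k.isLt; omega
            simp [hP, hik]
          rw [Finset.sum_eq_zero h0]
          show (if (i:ℕ) = (j:ℕ) ∧ (i:ℕ) < r then σ (i:ℕ) else 0) = 0
          rw [if_neg (by omega)]
      calc (U * Sr * Vᵀ).rank ≤ (U * Sr).rank := Matrix.rank_mul_le_left _ _
        _ ≤ Sr.rank := Matrix.rank_mul_le_right _ _
        _ = (P * Q).rank := by rw [hfac]
        _ ≤ P.rank := Matrix.rank_mul_le_left _ _
        _ ≤ r := P.rank_le_width
    · have hdiff : U * Sr * Vᵀ - Y = U * ((Sr - S) * Vᵀ) := by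
        rw [hSVD, Matrix.sub_mul, Matrix.mul_sub, ← Matrix.mul_assoc, ← Matrix.mul_assoc]
      rw [hdiff, frobSq_mul_left U hU,
        frobSq_mul_right Vᵀ (by rw [Matrix.transpose_transpose]; exact hV)]
      have hentry : ∀ (i : Fin m) (j : Fin n),
          ((Sr - S) i j) ^ 2 = if (i:ℕ) = (j:ℕ) ∧ r ≤ (i:ℕ) then σ (i:ℕ) ^ 2 else 0 := by
        intro i j
        rw [Matrix.sub_apply, hS]
        simp only [hSr]
        by_cases h : (i:ℕ) = (j:ℕ)
        · by_cases h2 : (i:ℕ) < r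
          · rw [if_pos (⟨h, h2⟩ : _ ∧ _), if_pos h, sub_self, if_neg (by omega)]
            ring
          · rw [if_neg (fun hc => h2 hc.2), if_pos h, if_pos ⟨h, not_lt.1 h2⟩, zero_sub, neg_sq]
        · rw [if_neg (fun hc => h hc.1), if_neg h, if_neg (fun hc => h hc.1), sub_self]
          ring
      have hinner : ∀ i : Fin m,
          (∑ j : Fin n, if (i:ℕ) = (j:ℕ) ∧ r ≤ (i:ℕ) then σ (i:ℕ) ^ 2 else 0)
          = if (i:ℕ) < n ∧ r ≤ (i:ℕ) then σ (i:ℕ) ^ 2 else 0 := by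
        intro i
        by_cases hin : (i:ℕ) < n
        · rw [Finset.sum_eq_single (⟨(i:ℕ), hin⟩ : Fin n)]
          · simp [hin]
          · intro k _ hk
            have : (i:ℕ) ≠ (k:ℕ) := fun hc => hk (Fin.ext hc.symm)
            simp [this]
          · simp
        · rw [Finset.sum_eq_zero]
          · simp [hin]
          · intro k _
            have : (i:ℕ) ≠ (k:ℕ) := by have := k.isLt; omega
            simp [this]
      have h1 : frobSq (Sr - S)
          = ∑ i : Fin m, (if (i:ℕ) < n ∧ r ≤ (i:ℕ) then σ (i:ℕ) ^ 2 else 0) := by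
        unfold frobSq
        refine Finset.sum_congr rfl fun i _ => ?_
        rw [Finset.sum_congr rfl fun j _ => hentry i j, hinner i]
      have h2 : ∑ i : Fin m, (if (i:ℕ) < n ∧ r ≤ (i:ℕ) then σ (i:ℕ) ^ 2 else 0)
          = ∑ i ∈ Finset.range m, (if i < n ∧ r ≤ i then σ i ^ 2 else 0) :=
        Fin.sum_univ_eq_sum_range (fun i => if i < n ∧ r ≤ i then σ i ^ 2 else 0) m
      have h3 : ∑ i ∈ Finset.range m, (if i < n ∧ r ≤ i then σ i ^ 2 else 0)
          = ∑ i ∈ (Finset.range m).filter (fun i => i < n ∧ r ≤ i), σ i ^ 2 :=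
        (Finset.sum_filter _ _).symm
      have h4 : ∑ i ∈ Finset.Ico r rY, σ i ^ 2
          = ∑ i ∈ (Finset.range m).filter (fun i => i < n ∧ r ≤ i), σ i ^ 2 := by
        apply Finset.sum_subset
        · intro x hx
          simp only [Finset.mem_Ico] at hx
          simp only [Finset.mem_filter, Finset.mem_range]
          omega
        · intro x hx hnx
          simp only [Finset.mem_filter, Finset.mem_range] at hx
          simp only [Finset.mem_Ico, not_and, not_lt] at hnx
          have : rY ≤ x := hnx hx.2.2
          rw [hσzero x this]; ring
      rw [h1, h2, h3, ← h4]
  · rintro c ⟨X, hX, rfl⟩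
    set W := Uᵀ * X * V with hWdef
    have hWrank : W.rank ≤ r :=
      le_trans (le_trans (Matrix.rank_mul_le_left _ _) (Matrix.rank_mul_le_right _ _)) hX
    have hYs : Uᵀ * Y * V = S := by
      rw [hSVD]
      simp only [← Matrix.mul_assoc]
      rw [hU, Matrix.one_mul, Matrix.mul_assoc, hV, Matrix.mul_one]
    have hfr : frobSq (X - Y) = frobSq (W - S) := by
      have h1 : W - S = Uᵀ * ((X - Y) * V) := by
        rw [hWdef, ← hYs, Matrix.sub_mul, Matrix.mul_sub, ← Matrix.mul_assoc,
          ← Matrix.mul_assoc]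
      rw [h1, frobSq_mul_left Uᵀ (by rw [Matrix.transpose_transpose]; exact hUU),
        frobSq_mul_right V hVV]
    rw [hfr]
    have hlow := diag_lower σ hσnn hσdec (fun i hi => hσzero i (le_trans hrYm hi)) S W hS r hWrank
    have he1 : ∑ i ∈ Finset.range n, σ i ^ 2 = ∑ i ∈ Finset.range rY, σ i ^ 2 := by
      symm
      apply Finset.sum_subset (Finset.range_subset_range.2 hrYn)
      intro x _ hx
      have hxy : rY ≤ x := not_lt.1 (by simpa using hx)
      rw [hσzero x hxy]; ring
    have he2 : ∑ i ∈ Finset.Ico r rY, σ i ^ 2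
        = ∑ i ∈ Finset.range rY, σ i ^ 2 - ∑ i ∈ Finset.range r, σ i ^ 2 :=
      Finset.sum_Ico_eq_sub _ hr
    rw [he2, ← he1]
    exact hlow
end

section
/- Fix integers n_S ≥ 2 and d ≥ 1, a real symmetric d×d matrix C_T, and define for a source data matrix D_S ∈ ℝ^{n_S×d} the covariance C_S(D_S) = (1/(n_S−1))(D_Sᵀ D_S − (1/n_S)(𝟏ᵀ D_S)ᵀ(𝟏ᵀ D_S)) and the CORAL loss L(D_S) = (1/(4d²)) ‖C_S(D_S) − C_T‖²_F. Then L is differentiable in D_S and its gradient is given entrywise by ∂L/∂D_S^{ij} = (1/(d²(n_S−1))) · [(D_S − (1/n_S) 𝟏(𝟏ᵀ D_S)) (C_S(D_S) − C_T)]^{ij}, i.e. the gradient matrix equals (1/(d²(n_S−1))) times the row-centered data matrix multiplied by (C_S(D_S) − C_T). -/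
open Matrix BigOperators

attribute [local instance] Matrix.normedAddCommGroup Matrix.normedSpace

/-- **Gradient of the CORAL loss w.r.t. the source features.** For
`C_S(D_S) = (1/(n_S−1))(D_Sᵀ D_S − (1/n_S)(𝟏ᵀD_S)ᵀ(𝟏ᵀD_S))` and
`L(D_S) = (1/(4d²)) ‖C_S(D_S) − C_T‖²_F`, the loss `L` is differentiable in `D_S` and its
partial derivative with respect to the entry `D_S^{ij}` (the derivative at `t = 0` of
`t ↦ L (D_S + t • E_{ij})`, where `E_{ij}` is the standard basis matrix) equals
`(1/(d²(n_S−1))) [(D_S − (1/n_S) 𝟏(𝟏ᵀD_S)) (C_S(D_S) − C_T)]^{ij}`, i.e. the gradient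
matrix is `(1/(d²(n_S−1)))` times the row-centered data matrix times `(C_S(D_S) − C_T)`. -/
theorem coral_loss_gradient_source
    (nS d : ℕ) (hnS : 2 ≤ nS) (hd : 1 ≤ d)
    (CT : Matrix (Fin d) (Fin d) ℝ) (hCT : CT.IsSymm)
    (cov : Matrix (Fin nS) (Fin d) ℝ → Matrix (Fin d) (Fin d) ℝ)
    (hcov : ∀ DS, cov DS = ((nS : ℝ) - 1)⁻¹ •
      (DSᵀ * DS - ((nS : ℝ))⁻¹ •
        Matrix.vecMulVec ((fun _ => (1 : ℝ)) ᵥ* DS) ((fun _ => (1 : ℝ)) ᵥ* DS)))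
    (L : Matrix (Fin nS) (Fin d) ℝ → ℝ)
    (hL : ∀ DS, L DS = (4 * (d : ℝ) ^ 2)⁻¹ * frobSq (cov DS - CT))
    (DS : Matrix (Fin nS) (Fin d) ℝ)
    (G : Matrix (Fin nS) (Fin d) ℝ)
    (hG : G = ((d : ℝ) ^ 2 * ((nS : ℝ) - 1))⁻¹ •
      ((DS - ((nS : ℝ))⁻¹ •
          Matrix.vecMulVec (fun _ => (1 : ℝ)) ((fun _ => (1 : ℝ)) ᵥ* DS)) *
        (cov DS - CT))) :
    DifferentiableAt ℝ L DS ∧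
    ∀ (i : Fin nS) (j : Fin d),
      HasDerivAt (fun t : ℝ => L (DS + t • Matrix.single i j 1)) (G i j) 0 := by
  set c1 : ℝ := ((nS : ℝ) - 1)⁻¹ with hc1
  set c2 : ℝ := ((nS : ℝ))⁻¹ with hc2
  -- entrywise formula for cov
  have hcovE : ∀ (M : Matrix (Fin nS) (Fin d) ℝ) (p q : Fin d),
      cov M p q = c1 * ((∑ k, M k p * M k q) - c2 * ((∑ k, M k p) * (∑ k, M k q))) := by
    intro M p q
    rw [hcov]
    simp [Matrix.smul_apply, Matrix.sub_apply, Matrix.mul_apply, Matrix.vecMulVec_apply,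
      Matrix.vecMul, dotProduct]
  -- explicit formula for L
  have hLE : ∀ (M : Matrix (Fin nS) (Fin d) ℝ),
      L M = (4 * (d : ℝ) ^ 2)⁻¹ * ∑ p, ∑ q,
        (c1 * ((∑ k, M k p * M k q) - c2 * ((∑ k, M k p) * (∑ k, M k q))) - CT p q) ^ 2 := by
    intro M
    rw [hL]
    unfold frobSq
    congr 1
    refine Finset.sum_congr rfl fun p _ => Finset.sum_congr rfl fun q _ => ?_
    rw [Matrix.sub_apply, hcovE]
  -- coordinate functions are differentiable
  have hcoord : ∀ (k : Fin nS) (p : Fin d),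
      Differentiable ℝ (fun M : Matrix (Fin nS) (Fin d) ℝ => M k p) := fun k p =>
    ((ContinuousLinearMap.proj p : (Fin d → ℝ) →L[ℝ] ℝ).comp
      (ContinuousLinearMap.proj k : (Matrix (Fin nS) (Fin d) ℝ) →L[ℝ] (Fin d → ℝ))).differentiable
  have hdiff : Differentiable ℝ L := by
    have hfun : L = fun M => (4 * (d : ℝ) ^ 2)⁻¹ * ∑ p, ∑ q,
        (c1 * ((∑ k, M k p * M k q) - c2 * ((∑ k, M k p) * (∑ k, M k q))) - CT p q) ^ 2 :=
      funext hLE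
    rw [hfun]
    refine Differentiable.const_mul ?_ _
    refine Differentiable.fun_sum fun p _ => Differentiable.fun_sum fun q _ => ?_
    refine Differentiable.pow (Differentiable.sub_const ?_ _) 2
    refine Differentiable.const_mul (Differentiable.sub ?_ ?_) _
    · exact Differentiable.fun_sum fun k _ => (hcoord k p).mul (hcoord k q)
    · exact Differentiable.const_mul ((Differentiable.fun_sum fun k _ => hcoord k p).mul
        (Differentiable.fun_sum fun k _ => hcoord k q)) _
  refine ⟨hdiff.differentiableAt, fun i j => ?_⟩
  set E : Matrix (Fin nS) (Fin d) ℝ := Matrix.single i j 1 with hE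
  have hEapp : ∀ (k : Fin nS) (p : Fin d), E k p = if i = k ∧ j = p then (1:ℝ) else 0 := by
    intro k p; rw [hE]; simp [Matrix.single]
  -- entry of the perturbed matrix
  have hentry : ∀ (t : ℝ) (k : Fin nS) (p : Fin d),
      (DS + t • E) k p = DS k p + t * E k p := by
    intro t k p; simp [Matrix.add_apply, Matrix.smul_apply]
  -- basic derivatives
  have hA : ∀ (k : Fin nS) (p : Fin d),
      HasDerivAt (fun t : ℝ => DS k p + t * E k p) (E k p) 0 := fun k p => by
    simpa using ((hasDerivAt_id (0:ℝ)).mul_const (E k p)).const_add (DS k p)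
  have hsum : ∀ (p q : Fin d),
      HasDerivAt (fun t : ℝ => ∑ k, (DS k p + t * E k p) * (DS k q + t * E k q))
        (∑ k, (E k p * DS k q + DS k p * E k q)) 0 := by
    intro p q
    have := HasDerivAt.fun_sum (fun k (_ : k ∈ Finset.univ) => ((hA k p).fun_mul (hA k q)))
    simpa using this
  have hS : ∀ (p : Fin d),
      HasDerivAt (fun t : ℝ => ∑ k, (DS k p + t * E k p)) (∑ k, E k p) 0 := fun p =>
    HasDerivAt.fun_sum (fun k _ => hA k p)
  have hprod : ∀ (p q : Fin d),
      HasDerivAt (fun t : ℝ => (∑ k, (DS k p + t * E k p)) * (∑ k, (DS k q + t * E k q)))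
        ((∑ k, E k p) * (∑ k, DS k q) + (∑ k, DS k p) * (∑ k, E k q)) 0 := by
    intro p q
    have := (hS p).fun_mul (hS q)
    simpa using this
  have hF : ∀ (p q : Fin d),
      HasDerivAt (fun t : ℝ =>
        c1 * ((∑ k, (DS k p + t * E k p) * (DS k q + t * E k q))
          - c2 * ((∑ k, (DS k p + t * E k p)) * (∑ k, (DS k q + t * E k q)))) - CT p q)
        (c1 * ((∑ k, (E k p * DS k q + DS k p * E k q))
          - c2 * ((∑ k, E k p) * (∑ k, DS k q) + (∑ k, DS k p) * (∑ k, E k q)))) 0 :=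
    fun p q => (((hsum p q).sub ((hprod p q).const_mul c2)).const_mul c1).sub_const (CT p q)
  have hsq := fun (p q : Fin d) => (hF p q).fun_pow 2
  have hfull := (HasDerivAt.fun_sum (fun p (_ : p ∈ Finset.univ) =>
      HasDerivAt.fun_sum (fun q (_ : q ∈ Finset.univ) => hsq p q))).const_mul
      ((4 * (d : ℝ) ^ 2)⁻¹)
  -- rewrite goal function
  have hfeq : (fun t : ℝ => L (DS + t • Matrix.single i j 1))
      = fun t : ℝ => (4 * (d : ℝ) ^ 2)⁻¹ * ∑ p, ∑ q,
        (c1 * ((∑ k, (DS k p + t * E k p) * (DS k q + t * E k q))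
          - c2 * ((∑ k, (DS k p + t * E k p)) * (∑ k, (DS k q + t * E k q)))) - CT p q) ^ 2 := by
    funext t
    rw [← hE, hLE]
    congr 1
  rw [hfeq]
  refine hfull.congr_deriv (Eq.symm ?_)
  -- clean up the derivative expression
  simp only [zero_mul, add_zero, Nat.reduceSub, pow_one, Nat.cast_ofNat]
  have e1 : ∀ p q : Fin d, (∑ k, E k p * DS k q) = if j = p then DS i q else 0 := by
    intro p q
    simp [hEapp, ite_and, ite_mul, mul_ite, zero_mul, mul_zero, Finset.sum_ite_eq]
  have e2 : ∀ p q : Fin d, (∑ k, DS k p * E k q) = if j = q then DS i p else 0 := by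
    intro p q
    simp [hEapp, ite_and, ite_mul, mul_ite, zero_mul, mul_zero, Finset.sum_ite_eq, mul_comm]
  have e3 : ∀ p : Fin d, (∑ k, E k p) = if j = p then (1:ℝ) else 0 := by
    intro p
    simp [hEapp, ite_and, Finset.sum_ite_eq]
  simp only [Finset.sum_add_distrib, e1, e2, e3]
  simp only [← hcovE]
  have step : ∀ p q : Fin d,
      (2:ℝ) * (cov DS p q - CT p q) * (c1 * (((if j = p then DS i q else 0)
          + (if j = q then DS i p else 0))
        - c2 * ((if j = p then (1:ℝ) else 0) * (∑ k, DS k q)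
          + (∑ k, DS k p) * (if j = q then (1:ℝ) else 0))))
      = (if j = p then 2*c1*((cov DS p q - CT p q) * (DS i q - c2 * ∑ k, DS k q)) else 0)
      + (if j = q then 2*c1*((cov DS p q - CT p q) * (DS i p - c2 * ∑ k, DS k p)) else 0) := by
    intro p q; split_ifs <;> ring
  simp only [step]
  have pull : ∀ (g : Fin d → ℝ) (c : Prop) [Decidable c],
      (∑ q : Fin d, if c then g q else 0) = if c then ∑ q, g q else 0 := by
    intro g c _; split_ifs <;> simp
  simp only [Finset.sum_add_distrib, pull, Finset.sum_ite_eq, Finset.mem_univ, if_true]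
  have hsymm : ∀ q : Fin d, cov DS j q - CT j q = cov DS q j - CT q j := by
    intro q
    rw [hcovE, hcovE, hCT.apply j q]
    have : (∑ k, DS k j * DS k q) = ∑ k, DS k q * DS k j :=
      Finset.sum_congr rfl fun k _ => mul_comm _ _
    rw [this]; ring_nf
  simp only [hsymm]
  rw [hG]
  simp only [Matrix.smul_apply, Matrix.mul_apply, Matrix.sub_apply, Matrix.vecMulVec_apply,
    Matrix.vecMul, dotProduct, one_mul, smul_eq_mul]
  rw [mul_add, Finset.mul_sum, Finset.mul_sum, ← Finset.sum_add_distrib]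
  refine Finset.sum_congr rfl fun x _ => ?_
  rw [hc1, mul_inv]
  ring
end

section
/- Fix integers n_T ≥ 2 and d ≥ 1, a real symmetric d×d matrix C_S, and define for a target data matrix D_T ∈ ℝ^{n_T×d} the covariance C_T(D_T) = (1/(n_T−1))(D_Tᵀ D_T − (1/n_T)(𝟏ᵀ D_T)ᵀ(𝟏ᵀ D_T)) and the CORAL loss L(D_T) = (1/(4d²)) ‖C_S − C_T(D_T)‖²_F. Then L is differentiable in D_T and its gradient is given entrywise by ∂L/∂D_T^{ij} = −(1/(d²(n_T−1))) · [(D_T − (1/n_T) 𝟏(𝟏ᵀ D_T)) (C_S − C_T(D_T))]^{ij}, i.e. the gradient matrix equals −(1/(d²(n_T−1))) times the row-centered target data matrix multiplied by (C_S − C_T(D_T)). -/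
open Matrix BigOperators

attribute [local instance] Matrix.normedAddCommGroup Matrix.normedSpace

private lemma sum_ite_left' {d : ℕ} (j : Fin d) (P : Fin d → Fin d → ℝ) :
    (∑ k, ∑ l, (if j = k then P k l else 0)) = ∑ l, P j l := by
  have h : ∀ k, (∑ l, (if j = k then P k l else 0)) = if j = k then (∑ l, P k l) else 0 := by
    intro k; split_ifs <;> simp
  rw [Finset.sum_congr rfl fun k _ => h k, Finset.sum_ite_eq]
  simp

private lemma sum_ite_right' {d : ℕ} (j : Fin d) (Q : Fin d → Fin d → ℝ) :
    (∑ k, ∑ l, (if j = l then Q k l else 0)) = ∑ k, Q k j := by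
  rw [Finset.sum_comm]; exact sum_ite_left' j fun l k => Q k l

/-- **Gradient of the CORAL loss w.r.t. the target features.** For
`C_T(D_T) = (1/(n_T−1))(D_Tᵀ D_T − (1/n_T)(𝟏ᵀD_T)ᵀ(𝟏ᵀD_T))` and
`L(D_T) = (1/(4d²)) ‖C_S − C_T(D_T)‖²_F`, the loss `L` is differentiable in `D_T` and its
partial derivative with respect to the entry `D_T^{ij}` (the derivative at `t = 0` of
`t ↦ L (D_T + t • E_{ij})`, where `E_{ij}` is the standard basis matrix) equals
`−(1/(d²(n_T−1))) [(D_T − (1/n_T) 𝟏(𝟏ᵀD_T)) (C_S − C_T(D_T))]^{ij}`, i.e. the gradient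
matrix is `−(1/(d²(n_T−1)))` times the row-centered target data matrix times
`(C_S − C_T(D_T))`. -/
theorem coral_loss_gradient_target
    (nT d : ℕ) (hnT : 2 ≤ nT) (hd : 1 ≤ d)
    (CS : Matrix (Fin d) (Fin d) ℝ) (hCS : CS.IsSymm)
    (cov : Matrix (Fin nT) (Fin d) ℝ → Matrix (Fin d) (Fin d) ℝ)
    (hcov : ∀ DT, cov DT = ((nT : ℝ) - 1)⁻¹ •
      (DTᵀ * DT - ((nT : ℝ))⁻¹ •
        Matrix.vecMulVec ((fun _ => (1 : ℝ)) ᵥ* DT) ((fun _ => (1 : ℝ)) ᵥ* DT)))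
    (L : Matrix (Fin nT) (Fin d) ℝ → ℝ)
    (hL : ∀ DT, L DT = (4 * (d : ℝ) ^ 2)⁻¹ * frobSq (CS - cov DT))
    (DT : Matrix (Fin nT) (Fin d) ℝ)
    (G : Matrix (Fin nT) (Fin d) ℝ)
    (hG : G = -(((d : ℝ) ^ 2 * ((nT : ℝ) - 1))⁻¹ •
      ((DT - ((nT : ℝ))⁻¹ •
          Matrix.vecMulVec (fun _ => (1 : ℝ)) ((fun _ => (1 : ℝ)) ᵥ* DT)) *
        (CS - cov DT)))) :
    DifferentiableAt ℝ L DT ∧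
    ∀ (i : Fin nT) (j : Fin d),
      HasDerivAt (fun t : ℝ => L (DT + t • Matrix.single i j 1)) (G i j) 0 := by
  have hd0 : (d : ℝ) ≠ 0 := by
    have : (1:ℝ) ≤ (d:ℝ) := by exact_mod_cast hd
    linarith
  have hn1 : (nT : ℝ) - 1 ≠ 0 := by
    have : (2:ℝ) ≤ (nT:ℝ) := by exact_mod_cast hnT
    linarith
  have hLs : ∀ X : Matrix (Fin nT) (Fin d) ℝ, L X = (4*(d:ℝ)^2)⁻¹ * ∑ k, ∑ l,
      (CS k l - ((nT:ℝ)-1)⁻¹ * ((∑ a, X a k * X a l)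
        - (nT:ℝ)⁻¹ * ((∑ a, X a k) * (∑ a, X a l))))^2 := by
    intro X
    rw [hL, hcov]
    simp [frobSq, Matrix.mul_apply, Matrix.vecMulVec_apply, Matrix.vecMul, dotProduct,
      Matrix.sub_apply, Matrix.smul_apply, Matrix.transpose_apply]
  constructor
  · have hLe : L = fun X => (4*(d:ℝ)^2)⁻¹ * ∑ k, ∑ l,
        (CS k l - ((nT:ℝ)-1)⁻¹ * ((∑ a, X a k * X a l)
          - (nT:ℝ)⁻¹ * ((∑ a, X a k) * (∑ a, X a l))))^2 := funext hLs
    rw [hLe]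
    have hent : ∀ (a : Fin nT) (k : Fin d),
        DifferentiableAt ℝ (fun X : Matrix (Fin nT) (Fin d) ℝ => X a k) DT := by
      intro a k
      have ha : DifferentiableAt ℝ (fun X : Fin nT → Fin d → ℝ => X a k) DT := by fun_prop
      exact ha
    fun_prop
  · intro i j
    set E := Matrix.single i j (1:ℝ) with hEdef
    have hEsum : ∀ k : Fin d, (∑ a, E a k) = if j = k then (1:ℝ) else 0 := by
      intro k
      simp [hEdef, Matrix.single, ite_and, Finset.sum_ite_eq]
    have hEDsum : ∀ k l : Fin d, (∑ a, E a k * DT a l) = if j = k then DT i l else 0 := by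
      intro k l
      simp [hEdef, Matrix.single, ite_and, ite_mul, zero_mul, one_mul,
        Finset.sum_ite_eq]
    have hDEsum : ∀ k l : Fin d, (∑ a, DT a k * E a l) = if j = l then DT i k else 0 := by
      intro k l
      simp [hEdef, Matrix.single, ite_and, mul_ite, mul_zero, mul_one,
        Finset.sum_ite_eq]
    have h1 : ∀ (a : Fin nT) (k : Fin d),
        HasDerivAt (fun t : ℝ => DT a k + t * E a k) (E a k) 0 := by
      intro a k
      simpa using ((hasDerivAt_id (0:ℝ)).mul_const (E a k)).const_add (DT a k)
    have hA : ∀ k : Fin d, HasDerivAt (fun t : ℝ => ∑ a, (DT a k + t * E a k))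
        (if j = k then (1:ℝ) else 0) 0 := by
      intro k
      rw [← hEsum k]
      exact HasDerivAt.fun_sum fun a _ => h1 a k
    have hB : ∀ k l : Fin d,
        HasDerivAt (fun t : ℝ => ∑ a, (DT a k + t * E a k) * (DT a l + t * E a l))
          ((if j = k then DT i l else 0) + (if j = l then DT i k else 0)) 0 := by
      intro k l
      have h := HasDerivAt.fun_sum (u := Finset.univ)
        (fun a (_ : a ∈ Finset.univ) => (h1 a k).mul (h1 a l))
      rw [← hEDsum k l, ← hDEsum k l, ← Finset.sum_add_distrib]
      simpa using h
    have hC : ∀ k l : Fin d,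
        HasDerivAt (fun t : ℝ => (∑ a, (DT a k + t * E a k)) * (∑ a, (DT a l + t * E a l)))
          ((if j = k then (1:ℝ) else 0) * (∑ a, DT a l)
            + (∑ a, DT a k) * (if j = l then (1:ℝ) else 0)) 0 := by
      intro k l
      have h := (hA k).mul (hA l)
      simp only [add_zero, zero_mul, mul_zero] at h
      exact h
    have hq : ∀ k l : Fin d,
        HasDerivAt (fun t : ℝ => CS k l - ((nT:ℝ)-1)⁻¹ *
            ((∑ a, (DT a k + t * E a k) * (DT a l + t * E a l))
              - (nT:ℝ)⁻¹ * ((∑ a, (DT a k + t * E a k)) * (∑ a, (DT a l + t * E a l)))))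
          (-(((nT:ℝ)-1)⁻¹ * (((if j = k then DT i l else 0) + (if j = l then DT i k else 0))
            - (nT:ℝ)⁻¹ * ((if j = k then (1:ℝ) else 0) * (∑ a, DT a l)
              + (∑ a, DT a k) * (if j = l then (1:ℝ) else 0))))) 0 := by
      intro k l
      exact HasDerivAt.const_sub (CS k l)
        (((hB k l).sub ((hC k l).const_mul _)).const_mul _)
    have hsq : ∀ k l : Fin d,
        HasDerivAt (fun t : ℝ => (CS k l - ((nT:ℝ)-1)⁻¹ *
            ((∑ a, (DT a k + t * E a k) * (DT a l + t * E a l))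
              - (nT:ℝ)⁻¹ * ((∑ a, (DT a k + t * E a k)) * (∑ a, (DT a l + t * E a l)))))^2)
          (-(2 * (CS k l - ((nT:ℝ)-1)⁻¹ * ((∑ a, DT a k * DT a l)
              - (nT:ℝ)⁻¹ * ((∑ a, DT a k) * (∑ a, DT a l))))
            * (((nT:ℝ)-1)⁻¹ * (((if j = k then DT i l else 0) + (if j = l then DT i k else 0))
              - (nT:ℝ)⁻¹ * ((if j = k then (∑ a, DT a l) else 0)
                + (if j = l then (∑ a, DT a k) else 0)))))) 0 := by
      intro k l
      have h := (hq k l).pow 2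
      norm_num at h
      exact h
    have hmain : HasDerivAt (fun t : ℝ => (4*(d:ℝ)^2)⁻¹ * ∑ k, ∑ l,
        (CS k l - ((nT:ℝ)-1)⁻¹ *
            ((∑ a, (DT a k + t * E a k) * (DT a l + t * E a l))
              - (nT:ℝ)⁻¹ * ((∑ a, (DT a k + t * E a k)) * (∑ a, (DT a l + t * E a l)))))^2)
        ((4*(d:ℝ)^2)⁻¹ * ∑ k, ∑ l,
          (-(2 * (CS k l - ((nT:ℝ)-1)⁻¹ * ((∑ a, DT a k * DT a l)
              - (nT:ℝ)⁻¹ * ((∑ a, DT a k) * (∑ a, DT a l))))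
            * (((nT:ℝ)-1)⁻¹ * (((if j = k then DT i l else 0) + (if j = l then DT i k else 0))
              - (nT:ℝ)⁻¹ * ((if j = k then (∑ a, DT a l) else 0)
                + (if j = l then (∑ a, DT a k) else 0))))))) 0 :=
      HasDerivAt.const_mul _ (HasDerivAt.fun_sum fun k _ => HasDerivAt.fun_sum fun l _ => hsq k l)
    have hfun : (fun t : ℝ => L (DT + t • E)) = fun t : ℝ => (4*(d:ℝ)^2)⁻¹ * ∑ k, ∑ l,
        (CS k l - ((nT:ℝ)-1)⁻¹ *
            ((∑ a, (DT a k + t * E a k) * (DT a l + t * E a l))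
              - (nT:ℝ)⁻¹ * ((∑ a, (DT a k + t * E a k)) * (∑ a, (DT a l + t * E a l)))))^2 := by
      funext t
      rw [hLs]
      simp only [Matrix.add_apply, Matrix.smul_apply, smul_eq_mul]
    rw [hfun]
    suffices hval : ((4*(d:ℝ)^2)⁻¹ * ∑ k, ∑ l,
          (-(2 * (CS k l - ((nT:ℝ)-1)⁻¹ * ((∑ a, DT a k * DT a l)
              - (nT:ℝ)⁻¹ * ((∑ a, DT a k) * (∑ a, DT a l))))
            * (((nT:ℝ)-1)⁻¹ * (((if j = k then DT i l else 0) + (if j = l then DT i k else 0))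
              - (nT:ℝ)⁻¹ * ((if j = k then (∑ a, DT a l) else 0)
                + (if j = l then (∑ a, DT a k) else 0))))))) = G i j by
      exact hval ▸ hmain
    -- abbreviations
    set M : Fin d → Fin d → ℝ := fun k l => CS k l - ((nT:ℝ)-1)⁻¹ * ((∑ a, DT a k * DT a l)
        - (nT:ℝ)⁻¹ * ((∑ a, DT a k) * (∑ a, DT a l))) with hM
    have hMs : ∀ k l : Fin d, M k l = M l k := by
      intro k l
      simp only [hM]
      rw [show (∑ a, DT a k * DT a l) = ∑ a, DT a l * DT a k from
        Finset.sum_congr rfl fun a _ => mul_comm _ _, hCS.apply l k]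
      ring
    have hsplit : ∀ k l : Fin d,
        (-(2 * M k l
          * (((nT:ℝ)-1)⁻¹ * (((if j = k then DT i l else 0) + (if j = l then DT i k else 0))
            - (nT:ℝ)⁻¹ * ((if j = k then (∑ a, DT a l) else 0)
              + (if j = l then (∑ a, DT a k) else 0))))))
        = (if j = k then
            -(2 * M k l * (((nT:ℝ)-1)⁻¹ * (DT i l - (nT:ℝ)⁻¹ * (∑ a, DT a l)))) else 0)
          + (if j = l then
            -(2 * M k l * (((nT:ℝ)-1)⁻¹ * (DT i k - (nT:ℝ)⁻¹ * (∑ a, DT a k)))) else 0) := by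
      intro k l
      by_cases h1 : j = k
      · subst h1
        by_cases h2 : j = l
        · subst h2; simp; try ring
        · simp [h2]; try ring
      · by_cases h2 : j = l
        · subst h2; simp [h1]; try ring
        · simp [h1, h2]
    calc ((4*(d:ℝ)^2)⁻¹ * ∑ k, ∑ l,
          (-(2 * M k l
            * (((nT:ℝ)-1)⁻¹ * (((if j = k then DT i l else 0) + (if j = l then DT i k else 0))
              - (nT:ℝ)⁻¹ * ((if j = k then (∑ a, DT a l) else 0)
                + (if j = l then (∑ a, DT a k) else 0)))))))
        = (4*(d:ℝ)^2)⁻¹ * ∑ k, ∑ l,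
            ((if j = k then
              -(2 * M k l * (((nT:ℝ)-1)⁻¹ * (DT i l - (nT:ℝ)⁻¹ * (∑ a, DT a l)))) else 0)
            + (if j = l then
              -(2 * M k l * (((nT:ℝ)-1)⁻¹ * (DT i k - (nT:ℝ)⁻¹ * (∑ a, DT a k)))) else 0)) := by
          rw [Finset.sum_congr rfl fun k _ => Finset.sum_congr rfl fun l _ => hsplit k l]
      _ = (4*(d:ℝ)^2)⁻¹ *
          ((∑ l, -(2 * M j l * (((nT:ℝ)-1)⁻¹ * (DT i l - (nT:ℝ)⁻¹ * (∑ a, DT a l)))))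
          + (∑ k, -(2 * M k j * (((nT:ℝ)-1)⁻¹ * (DT i k - (nT:ℝ)⁻¹ * (∑ a, DT a k)))))) := by
          congr 1
          simp only [Finset.sum_add_distrib]
          rw [sum_ite_left' j, sum_ite_right' j]
      _ = G i j := by
          have hPQ : (∑ l, -(2 * M j l * (((nT:ℝ)-1)⁻¹ * (DT i l - (nT:ℝ)⁻¹ * (∑ a, DT a l)))))
              = ∑ k, -(2 * M k j * (((nT:ℝ)-1)⁻¹ * (DT i k - (nT:ℝ)⁻¹ * (∑ a, DT a k)))) :=
            Finset.sum_congr rfl fun l _ => by rw [hMs j l]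
          have hGs : G i j = -(((d:ℝ)^2*((nT:ℝ)-1))⁻¹ *
              ∑ k, (DT i k - (nT:ℝ)⁻¹ * (∑ a, DT a k)) * M k j) := by
            rw [hG, hcov]
            simp only [Matrix.neg_apply, Matrix.smul_apply, Matrix.mul_apply, Matrix.sub_apply,
              Matrix.vecMulVec_apply, Matrix.vecMul, dotProduct, Matrix.transpose_apply,
              smul_eq_mul, one_mul, hM]
          rw [hPQ, hGs, ← Finset.sum_add_distrib, Finset.mul_sum, Finset.mul_sum,
            ← Finset.sum_neg_distrib]
          refine Finset.sum_congr rfl fun k _ => ?_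
          simp only [mul_inv]
          ring
end
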